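/- Let q ∈ ℕ_S and v_p ∈ ℤ_S^d with gcd(q, v_p) = 1. Fix any γ ∈ SL_d(ℤ_S) with v_p · γ^{−1} ∈ ℤ_S · e_d, and let Γ₁(q) = {γ' ∈ SL_d(ℤ_S) : e_d γ' ≡ e_d mod q}. Then the assignment (γ^{−1}Γ₁(q)γ) g ↦ (ℤ_S^d + v_p/q) g is a well-defined bijection from the left quotient γ^{−1}Γ₁(q)γ\UL_d(ℚ_S) onto the set Y_{v_p/q} = {(ℤ_S^d + v_p/q) g : g ∈ UL_d(ℚ_S)} of translated unimodular S-lattices. -/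

import Mathlib

open MeasureTheory Matrix Set
open scoped BigOperators NNReal ENNReal

noncomputable section

namespace SArith

instance (p : Nat.Primes) : Fact (Nat.Prime (p : ℕ)) := ⟨p.2⟩

instance (p : ℕ) [Fact p.Prime] : MeasurableSpace ℚ_[p] := borel _
instance (p : ℕ) [Fact p.Prime] : BorelSpace ℚ_[p] := ⟨rfl⟩

instance {m n : ℕ} {α : Type*} [MeasurableSpace α] :
    MeasurableSpace (Matrix (Fin m) (Fin n) α) :=
  inferInstanceAs (MeasurableSpace (Fin m → Fin n → α))

/-- Strict fundamental domain `F` for the left multiplication action of `Γ` on `Gs`. -/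
def IsStrictFD {G : Type*} [Mul G] (Γ Gs F : Set G) : Prop :=
  F ⊆ Gs ∧ ∀ g ∈ Gs, ∃! γ, γ ∈ Γ ∧ γ * g ∈ F

/-- `UL_m(ℚ_p)` for a finite prime `p`. -/
def ULp (p : ℕ) [Fact p.Prime] (m : ℕ) : Set (Matrix (Fin m) (Fin m) ℚ_[p]) :=
  {g | ‖g.det‖ = 1}

/-- `SL_m(ℚ_p)` for a finite prime `p`. -/
def SLp (p : ℕ) [Fact p.Prime] (m : ℕ) : Set (Matrix (Fin m) (Fin m) ℚ_[p]) :=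
  {g | g.det = 1}

/-- The Haar measure on `ℚ_p^m`, normalized so that `ℤ_p^m` has measure `1`. -/
def IsVolP (p : ℕ) [Fact p.Prime] (m : ℕ) (vol : Measure (Fin m → ℚ_[p])) : Prop :=
  (∀ x, Measure.map (fun y => x + y) vol = vol) ∧ vol {x | ∀ i, ‖x i‖ ≤ 1} = 1

variable (Sf : Finset Nat.Primes)

/-- The S-adic ring `ℚ_S = ℝ × ∏_{p ∈ S_f} ℚ_p`. -/
abbrev QS : Type := ℝ × ((p : Sf) → ℚ_[(p.1 : ℕ)])

/-- Diagonal embedding of `ℚ` into `ℚ_S`. -/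
def diagQ (x : ℚ) : QS Sf := (x, fun p => (x : ℚ_[(p.1 : ℕ)]))

/-- `z` is an `S`-integer. -/
def IsSInt (z : ℚ) : Prop := ∀ q : Nat.Primes, q ∉ Sf → padicNorm q z ≤ 1

/-- Vectors over ℚ_S. -/
abbrev QV (d : ℕ) : Type := Fin d → QS Sf

def ratVec {d : ℕ} (k : Fin d → ℚ) : QV Sf d := fun i => diagQ Sf (k i)

def IsSIntVec {d : ℕ} (k : Fin d → ℚ) : Prop := ∀ i, IsSInt Sf (k i)

/-- the euclidean norm of the archimedean component. -/
def normInf {d : ℕ} (v : QV Sf d) : ℝ := Real.sqrt (∑ i, ((v i).1) ^ 2)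

/-- the max norm of the component at the finite place `p`. -/
def normFin {d : ℕ} (v : QV Sf d) (p : Sf) : ℝ := ⨆ i, ‖(v i).2 p‖

abbrev Mat (d : ℕ) : Type := Matrix (Fin d) (Fin d) (QS Sf)

def matInf {d : ℕ} (g : Mat Sf d) : Matrix (Fin d) (Fin d) ℝ := fun i j => (g i j).1

def matFin {d : ℕ} (g : Mat Sf d) (p : Sf) : Matrix (Fin d) (Fin d) ℚ_[(p.1 : ℕ)] :=
  fun i j => (g i j).2 p

def matDiag {d : ℕ} (γ : Matrix (Fin d) (Fin d) ℚ) : Mat Sf d := fun i j => diagQ Sf (γ i j)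

/-- `UL_d(ℚ_S)`. -/
def ULset (d : ℕ) : Set (Mat Sf d) :=
  {g | (Matrix.det g).1 = 1 ∧ ∀ p : Sf, ‖(Matrix.det g).2 p‖ = 1}

/-- `SL_d(ℚ_S)`. -/
def SLQS (d : ℕ) : Set (Mat Sf d) := {g | Matrix.det g = 1}

/-- `SL_d(ℤ_S)` as a set of rational matrices. -/
def SLZS (d : ℕ) : Set (Matrix (Fin d) (Fin d) ℚ) :=
  {γ | (∀ i j, IsSInt Sf (γ i j)) ∧ γ.det = 1}

/-- the principal congruence subgroup `Γ(q)`. -/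
def Gamma (q : ℕ) (d : ℕ) : Set (Matrix (Fin d) (Fin d) ℚ) :=
  {γ | γ ∈ SLZS Sf d ∧ ∀ i j, IsSInt Sf ((γ i j - if i = j then 1 else 0) / q)}

/-- the congruence subgroup `Γ₁(q)` (last row congruent to `e_d` mod `q`). -/
def Gamma1 (q : ℕ) (d : ℕ) (hd : 0 < d) : Set (Matrix (Fin d) (Fin d) ℚ) :=
  {γ | γ ∈ SLZS Sf d ∧ ∀ j : Fin d,
    IsSInt Sf ((γ ⟨d - 1, by omega⟩ j - if j = ⟨d - 1, by omega⟩ then 1 else 0) / q)}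

/-- `μ` is concentrated on `G` and invariant under right multiplication by elements of `G`. -/
def RightInvariantOn {d : ℕ} (μ : Measure (Mat Sf d)) (G : Set (Mat Sf d)) : Prop :=
  μ Gᶜ = 0 ∧ ∀ g ∈ G, Measure.map (fun x => x * g) μ = μ

/-- `μ̃_S` : Haar measure on `UL_d(ℚ_S)` normalized so that `SL_d(ℤ_S)\UL_d(ℚ_S)`
has measure one. -/
def IsHaarUL {d : ℕ} (μ : Measure (Mat Sf d)) : Prop :=
  RightInvariantOn Sf μ (ULset Sf d) ∧
    ∃ F₀, MeasurableSet F₀ ∧ IsStrictFD (matDiag Sf '' SLZS Sf d) (ULset Sf d) F₀ ∧ μ F₀ = 1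

/-- the fundamental domain `𝒯` of `ℤ_S^d` in `ℚ_S^d`. -/
def Tfund (d : ℕ) : Set (QV Sf d) :=
  {w | (∀ i, (w i).1 ∈ Set.Ico (0 : ℝ) 1) ∧ ∀ p : Sf, ∀ i, ‖(w i).2 p‖ ≤ 1}

/-- `vol` on `ℚ_S^d` : translation invariant, normalized on the fundamental domain `𝒯`. -/
def IsVol {d : ℕ} (vol : Measure (QV Sf d)) : Prop :=
  (∀ x : QV Sf d, Measure.map (fun y => x + y) vol = vol) ∧ vol (Tfund Sf d) = 1

/-- The Siegel transform of `f` evaluated at a point set `Λ`. -/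
def siegel {d : ℕ} (f : QV Sf d → ℝ) (Λ : Set (QV Sf d)) : ℝ := ∑' w : Λ, f w

/-- the translated lattice `(ℤ_S^d + ξ)·g`. -/
def affLat {d : ℕ} (ξ : QV Sf d) (g : Mat Sf d) : Set (QV Sf d) :=
  (fun k => Matrix.vecMul (ratVec Sf k + ξ) g) '' {k | IsSIntVec Sf k}

/-- evaluation of the quadratic form with (symmetric) coefficient matrix `A`. -/
def Qeval {d : ℕ} (A : Mat Sf d) (v : QV Sf d) : QS Sf :=
  dotProduct v (Matrix.mulVec A v)

def QNondeg {d : ℕ} (A : Mat Sf d) : Prop :=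
  (Matrix.det A).1 ≠ 0 ∧ ∀ p : Sf, (Matrix.det A).2 p ≠ 0

def QIsotropic {d : ℕ} (A : Mat Sf d) : Prop :=
  (∃ x : Fin d → ℝ, x ≠ 0 ∧ dotProduct x ((matInf Sf A).mulVec x) = 0) ∧
  ∀ p : Sf, ∃ x : Fin d → ℚ_[(p.1 : ℕ)], x ≠ 0 ∧
    dotProduct x ((matFin Sf A p).mulVec x) = 0

/-- index set for the parameters `T = (T_p)_{p ∈ S}`. -/
structure TIdx where
  inf : ℝ
  fin : (p : Sf) → ℤ

def TIdx.le {Sf : Finset Nat.Primes} (T T' : TIdx Sf) : Prop :=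
  T.inf ≤ T'.inf ∧ ∀ p, T.fin p ≤ T'.fin p

/-- `T_p = p^{t_p}` as a real number. -/
def TIdx.tp {Sf : Finset Nat.Primes} (T : TIdx Sf) (p : Sf) : ℝ :=
  ((p.1 : ℕ) : ℝ) ^ (T.fin p)

/-- `|T| = ∏_{p ∈ S} T_p`. -/
def TIdx.tvol {Sf : Finset Nat.Primes} (T : TIdx Sf) : ℝ := T.inf * ∏ p : Sf, T.tp p

/-- `n ∈ ℕ_S`. -/
def memNS (n : ℕ) : Prop := 0 < n ∧ ∀ p : Nat.Primes, p ∈ Sf → ¬((p : ℕ) ∣ n)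

/-- `m ∈ ℙ_S`. -/
def memPS (m : ℕ) : Prop := 0 < m ∧ ∀ p : Nat.Primes, (p : ℕ) ∣ m → p ∈ Sf

/-- `ζ_S(k) = ∑_{t ∈ ℕ_S} t^{-k}`. -/
def zetaS (k : ℕ) : ℝ := ∑' n : {n : ℕ // memNS Sf n}, ((n : ℕ) : ℝ) ^ (-(k : ℤ))

/-- `gcd(a, t) = 1` for an `S`-integer `a` (via an integer representative `a·m`, `m ∈ ℙ_S`). -/
def coprimeSInt (a : ℚ) (t : ℕ) : Prop :=
  ∃ m : ℕ, memPS Sf m ∧ (a * m).den = 1 ∧ Nat.Coprime ((a * m).num.natAbs) t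

/-- `gcd(q, v) = 1` for an `S`-integer vector `v`. -/
def coprimeVec {d : ℕ} (q : ℕ) (v : Fin d → ℚ) : Prop :=
  ∃ m : ℕ, memPS Sf m ∧ (∀ i, (v i * m).den = 1) ∧
    Nat.Coprime q (Finset.univ.gcd fun i => (v i * m).num.natAbs)

/-- The subgroup `H` of `UL_d(ℚ_S)` (first row equal to `e₁`). -/
def Hset (d : ℕ) (hd : 0 < d) : Set (Mat Sf d) :=
  {h | h ∈ ULset Sf d ∧ h ⟨0, hd⟩ ⟨0, hd⟩ = 1 ∧
    ∀ j : Fin d, j ≠ ⟨0, hd⟩ → h ⟨0, hd⟩ j = 0}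

/-- `H_{ℤ_S} = H ∩ SL_d(ℤ_S)` as rational matrices. -/
def HZS (d : ℕ) (hd : 0 < d) : Set (Matrix (Fin d) (Fin d) ℚ) :=
  {γ | γ ∈ SLZS Sf d ∧ γ ⟨0, hd⟩ ⟨0, hd⟩ = 1 ∧
    ∀ j : Fin d, j ≠ ⟨0, hd⟩ → γ ⟨0, hd⟩ j = 0}

/-- every place-component of `y` is nonzero. -/
def allPlacesNonzero {d : ℕ} (y : QV Sf d) : Prop :=
  (fun i => (y i).1) ≠ 0 ∧ ∀ p : Sf, (fun i => (y i).2 p) ≠ 0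

/-- the first standard basis vector `e₁` of `ℚ_S^d`. -/
def e1vec (d : ℕ) (hd : 0 < d) : QV Sf d := fun i => if i = ⟨0, hd⟩ then 1 else 0

end SArith

namespace SArith

/-- the block matrix `A` appearing in the map `Φ`. -/
def blockA {K : Type*} [Field K] {m : ℕ} (v' : Fin m → K) (g' : Matrix (Fin m) (Fin m) K) :
    Matrix (Fin (m + 1)) (Fin (m + 1)) K :=
  Matrix.of fun i j =>
    if hi : i.val = 0 then (if j.val = 0 then 1 else 0)
    else if hj : j.val = 0 then v' ⟨i.val - 1, by have := i.isLt; omega⟩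
    else g' ⟨i.val - 1, by have := i.isLt; omega⟩ ⟨j.val - 1, by have := j.isLt; omega⟩

/-- the matrix `B` appearing in the map `Φ` (first row `y`, `(2,2)` entry `1/y₁`,
remaining diagonal entries `1`, all other entries `0`). -/
def blockB {K : Type*} [Field K] {m : ℕ} (y : Fin (m + 1) → K) :
    Matrix (Fin (m + 1)) (Fin (m + 1)) K :=
  Matrix.of fun i j =>
    if i.val = 0 then y j
    else if i = j then (if i.val = 1 then (y 0)⁻¹ else 1)
    else 0

/-- the map `Φ`. -/
def Phi {K : Type*} [Field K] {m : ℕ}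
    (t : (Fin m → K) × Matrix (Fin m) (Fin m) K × (Fin (m + 1) → K)) :
    Matrix (Fin (m + 1)) (Fin (m + 1)) K :=
  blockA t.1 t.2.1 * blockB t.2.2

end SArith

open SArith

/-!
Put `u = v_p / q`. If `(ℤ_S^d + u) g = (ℤ_S^d + u) g'`, then differences of lattice points show
that every row of `g' g⁻¹` is an `S`-integral vector, so `g' = δ g` with `δ` an `S`-integral
matrix satisfying `u δ ≡ u mod ℤ_S^d`; comparing determinants at the archimedean place gives
`det δ = 1`. Conversely such a `δ ∈ SL_d(ℤ_S)` does not change the translated lattice. It remains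
to identify this stabiliser of `u + ℤ_S^d` with `γ⁻¹ Γ₁(q) γ`. Writing `v_p = z e_d γ`, one has
`u δ - u = (z / q) (e_d γ δ γ⁻¹ - e_d) γ`, and `gcd(q, v_p) = 1` makes `z` a unit at every prime
dividing `q`, so `u δ - u` is `S`-integral exactly when `e_d γ δ γ⁻¹ ≡ e_d mod q`.
-/

namespace SArith

def sIntegers (Sf : Finset Nat.Primes) : Subring ℚ where
  carrier := {z | IsSInt Sf z}
  zero_mem' := fun p _ => by rw [padicNorm.zero]; exact zero_le_one
  one_mem' := fun p _ => padicNorm.one.le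
  add_mem' := fun ha hb p hp => padicNorm.nonarchimedean.trans (max_le (ha p hp) (hb p hp))
  mul_mem' := fun ha hb p hp => by
    rw [padicNorm.mul]; exact mul_le_one₀ (ha p hp) (padicNorm.nonneg _) (hb p hp)
  neg_mem' := fun ha p hp => by rw [padicNorm.neg]; exact ha p hp

variable {Sf : Finset Nat.Primes} {d : ℕ}

lemma mem_sIntegers {z : ℚ} : z ∈ sIntegers Sf ↔ IsSInt Sf z := Iff.rfl

lemma IsSIntVec.sub {k k' : Fin d → ℚ} (hk : IsSIntVec Sf k) (hk' : IsSIntVec Sf k') :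
    IsSIntVec Sf (k - k') :=
  fun i => mem_sIntegers.1 (sub_mem (hk i) (hk' i))

lemma isSIntVec_single (i : Fin d) {z : ℚ} (hz : IsSInt Sf z) : IsSIntVec Sf (Pi.single i z) := by
  intro j
  rcases eq_or_ne j i with rfl | h
  · simpa using hz
  · simpa [h] using mem_sIntegers.1 (zero_mem (sIntegers Sf))

lemma IsSIntVec.vecMul {k : Fin d → ℚ} {M : Matrix (Fin d) (Fin d) ℚ} (hk : IsSIntVec Sf k)
    (hM : ∀ i j, IsSInt Sf (M i j)) : IsSIntVec Sf (k ᵥ* M) :=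
  fun j => mem_sIntegers.1 <| sum_mem (t := Finset.univ) fun i _ => mul_mem (hk i) (hM i j)

lemma isSInt_mul_apply {M N : Matrix (Fin d) (Fin d) ℚ} (hM : ∀ i j, IsSInt Sf (M i j))
    (hN : ∀ i j, IsSInt Sf (N i j)) : ∀ i j, IsSInt Sf ((M * N) i j) :=
  fun i => IsSIntVec.vecMul (hM i) hN

lemma isSInt_adjugate_apply {M : Matrix (Fin d) (Fin d) ℚ} (hM : ∀ i j, IsSInt Sf (M i j)) :
    ∀ i j, IsSInt Sf (M.adjugate i j) := by
  let N : Matrix (Fin d) (Fin d) (sIntegers Sf) := fun i j => ⟨M i j, hM i j⟩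
  have hN : (sIntegers Sf).subtype.mapMatrix N = M := rfl
  intro i j
  rw [← hN, ← RingHom.map_adjugate]
  exact (N.adjugate i j).2

lemma isUnit_det_of_mem_SLZS {γ : Matrix (Fin d) (Fin d) ℚ} (hγ : γ ∈ SLZS Sf d) :
    IsUnit γ.det := by
  rw [hγ.2]; exact isUnit_one

lemma inv_mem_SLZS {γ : Matrix (Fin d) (Fin d) ℚ} (hγ : γ ∈ SLZS Sf d) : γ⁻¹ ∈ SLZS Sf d := by
  refine ⟨?_, by rw [Matrix.det_nonsing_inv, hγ.2, Ring.inverse_one]⟩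
  rw [Matrix.inv_def, hγ.2, Ring.inverse_one, one_smul]
  exact isSInt_adjugate_apply hγ.1

lemma mul_mem_SLZS {γ δ : Matrix (Fin d) (Fin d) ℚ} (hγ : γ ∈ SLZS Sf d) (hδ : δ ∈ SLZS Sf d) :
    γ * δ ∈ SLZS Sf d :=
  ⟨isSInt_mul_apply hγ.1 hδ.1, by rw [Matrix.det_mul, hγ.2, hδ.2, one_mul]⟩

lemma isSIntVec_vecMul_iff {w : Fin d → ℚ} {γ : Matrix (Fin d) (Fin d) ℚ}
    (hγ : γ ∈ SLZS Sf d) : IsSIntVec Sf (w ᵥ* γ) ↔ IsSIntVec Sf w := by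
  refine ⟨fun h => ?_, fun h => h.vecMul hγ.1⟩
  have := h.vecMul (inv_mem_SLZS hγ).1
  rwa [Matrix.vecMul_vecMul, Matrix.mul_nonsing_inv _ (isUnit_det_of_mem_SLZS hγ),
    Matrix.vecMul_one] at this

def diagQHom (Sf : Finset Nat.Primes) : ℚ →+* QS Sf :=
  (Rat.castHom ℝ).prod (RingHom.pi fun p => Rat.castHom ℚ_[(p.1 : ℕ)])

lemma ratVec_eq_comp (k : Fin d → ℚ) : ratVec Sf k = diagQHom Sf ∘ k := rfl

lemma ratVec_injective : Function.Injective (ratVec Sf (d := d)) :=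
  fun _ _ h => funext fun i => (diagQHom Sf).injective (congrFun h i)

lemma ratVec_add (k k' : Fin d → ℚ) : ratVec Sf (k + k') = ratVec Sf k + ratVec Sf k' :=
  funext fun i => map_add (diagQHom Sf) (k i) (k' i)

lemma ratVec_sub (k k' : Fin d → ℚ) : ratVec Sf (k - k') = ratVec Sf k - ratVec Sf k' :=
  funext fun i => map_sub (diagQHom Sf) (k i) (k' i)

lemma ratVec_single_one (i : Fin d) : ratVec Sf (Pi.single i 1) = Pi.single i 1 :=
  funext fun j => by
    rw [ratVec_eq_comp, Function.comp_apply,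
      Pi.apply_single (fun _ => diagQHom Sf) (fun _ => map_zero _), map_one]

lemma ratVec_vecMul_matDiag (k : Fin d → ℚ) (M : Matrix (Fin d) (Fin d) ℚ) :
    ratVec Sf k ᵥ* matDiag Sf M = ratVec Sf (k ᵥ* M) :=
  funext fun j => (RingHom.map_vecMul (diagQHom Sf) M k j).symm

lemma matDiag_mul (M N : Matrix (Fin d) (Fin d) ℚ) :
    matDiag Sf (M * N) = matDiag Sf M * matDiag Sf N :=
  Matrix.map_mul (f := diagQHom Sf)

lemma matDiag_one : matDiag Sf (1 : Matrix (Fin d) (Fin d) ℚ) = 1 :=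
  Matrix.map_one (diagQHom Sf) (map_zero _) (map_one _)

lemma det_matDiag (M : Matrix (Fin d) (Fin d) ℚ) : (matDiag Sf M).det = diagQ Sf M.det :=
  ((diagQHom Sf).map_det M).symm

lemma isUnit_det_of_mem_ULset {g : Mat Sf d} (hg : g ∈ ULset Sf d) : IsUnit g.det := by
  refine isUnit_iff_exists_inv.2 ⟨(1, fun p => (g.det.2 p)⁻¹), Prod.ext ?_ (funext fun p => ?_)⟩
  · simp [hg.1]
  · exact mul_inv_cancel₀ (norm_ne_zero_iff.1 (by simp [hg.2 p]))

lemma det_eq_one_of_matDiag_mul_eq {δ : Matrix (Fin d) (Fin d) ℚ} {g g' : Mat Sf d}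
    (hg : g ∈ ULset Sf d) (hg' : g' ∈ ULset Sf d) (h : matDiag Sf δ * g = g') : δ.det = 1 := by
  have := congrArg (fun M : Mat Sf d => M.det.1) h
  simp only [Matrix.det_mul, det_matDiag, Prod.fst_mul, hg.1, hg'.1, mul_one] at this
  have hreal : ((δ.det : ℚ) : ℝ) = 1 := this
  exact_mod_cast hreal

lemma affLat_matDiag_mul_subset {u : Fin d → ℚ} {δ : Matrix (Fin d) (Fin d) ℚ}
    (hδ : ∀ i j, IsSInt Sf (δ i j)) (hu : IsSIntVec Sf (u ᵥ* δ - u)) (g : Mat Sf d) :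
    affLat Sf (ratVec Sf u) (matDiag Sf δ * g) ⊆ affLat Sf (ratVec Sf u) g := by
  rintro _ ⟨k, hk, rfl⟩
  have hk' : (k + u) ᵥ* δ - u = k ᵥ* δ + (u ᵥ* δ - u) := by
    rw [Matrix.add_vecMul, add_sub_assoc]
  refine ⟨(k + u) ᵥ* δ - u, ?_, ?_⟩
  · rw [hk']
    exact fun i => mem_sIntegers.1 (add_mem (hk.vecMul hδ i) (hu i))
  · simp only
    rw [← ratVec_add, ← ratVec_add, sub_add_cancel, ← Matrix.vecMul_vecMul, ratVec_vecMul_matDiag]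

lemma affLat_matDiag_mul {u : Fin d → ℚ} {δ : Matrix (Fin d) (Fin d) ℚ} (hδ : δ ∈ SLZS Sf d)
    (hu : IsSIntVec Sf (u ᵥ* δ - u)) (g : Mat Sf d) :
    affLat Sf (ratVec Sf u) (matDiag Sf δ * g) = affLat Sf (ratVec Sf u) g := by
  have hinv : δ⁻¹ * δ = 1 := Matrix.nonsing_inv_mul _ (isUnit_det_of_mem_SLZS hδ)
  have hu' : IsSIntVec Sf (u ᵥ* δ⁻¹ - u) := by
    have e : u ᵥ* δ⁻¹ - u = -((u ᵥ* δ - u) ᵥ* δ⁻¹) := by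
      rw [Matrix.sub_vecMul, Matrix.vecMul_vecMul,
        Matrix.mul_nonsing_inv _ (isUnit_det_of_mem_SLZS hδ), Matrix.vecMul_one, neg_sub]
    rw [e]
    exact fun i => mem_sIntegers.1 (neg_mem (hu.vecMul (inv_mem_SLZS hδ).1 i))
  refine (affLat_matDiag_mul_subset hδ.1 hu g).antisymm ?_
  have := affLat_matDiag_mul_subset (inv_mem_SLZS hδ).1 hu' (matDiag Sf δ * g)
  rwa [← mul_assoc, ← matDiag_mul, hinv, matDiag_one, one_mul] at this

lemma exists_matDiag_mul_eq_of_affLat_subset {u : Fin d → ℚ} {g g' : Mat Sf d}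
    (hg : IsUnit g.det) (h : affLat Sf (ratVec Sf u) g' ⊆ affLat Sf (ratVec Sf u) g) :
    ∃ δ : Matrix (Fin d) (Fin d) ℚ, (∀ i j, IsSInt Sf (δ i j)) ∧
      matDiag Sf δ * g = g' ∧ IsSIntVec Sf (u ᵥ* δ - u) := by
  have hmem : ∀ k, IsSIntVec Sf k →
      ∃ k', IsSIntVec Sf k' ∧ ratVec Sf (k' + u) ᵥ* g = ratVec Sf (k + u) ᵥ* g' := by
    intro k hk
    obtain ⟨k', hk', he⟩ := h ⟨k, hk, rfl⟩
    exact ⟨k', hk', by rw [ratVec_add, ratVec_add]; exact he⟩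
  obtain ⟨k₀, hk₀, he₀⟩ := hmem 0 fun _ => mem_sIntegers.1 (zero_mem _)
  have hrow : ∀ i, ∃ k, IsSIntVec Sf k ∧ ratVec Sf k ᵥ* g = g' i := by
    intro i
    obtain ⟨k, hk, he⟩ := hmem (Pi.single i 1) (isSIntVec_single i (mem_sIntegers.1 (one_mem _)))
    refine ⟨k - k₀, hk.sub hk₀, ?_⟩
    calc ratVec Sf (k - k₀) ᵥ* g = ratVec Sf (k + u) ᵥ* g - ratVec Sf (k₀ + u) ᵥ* g := by
          rw [← Matrix.sub_vecMul, ← ratVec_sub, add_sub_add_right_eq_sub]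
      _ = ratVec Sf (Pi.single i 1 + u) ᵥ* g' - ratVec Sf (0 + u) ᵥ* g' := by rw [he, he₀]
      _ = g' i := by
          rw [← Matrix.sub_vecMul, ← ratVec_sub, add_sub_add_right_eq_sub, sub_zero,
            ratVec_single_one, Matrix.single_one_vecMul]
          rfl
  choose k hk hkg using hrow
  have hδg : matDiag Sf (Matrix.of k) * g = g' := Matrix.ext fun i j => congrFun (hkg i) j
  refine ⟨Matrix.of k, hk, hδg, ?_⟩
  have hu : ratVec Sf (u ᵥ* Matrix.of k) ᵥ* g = ratVec Sf (k₀ + u) ᵥ* g := by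
    rw [← ratVec_vecMul_matDiag, Matrix.vecMul_vecMul, hδg, he₀, zero_add]
  rw [ratVec_injective (Matrix.vecMul_injective_of_isUnit ((g.isUnit_iff_isUnit_det).2 hg) hu),
    add_sub_cancel_right]
  exact hk₀

lemma exists_padicNorm_eq_one_of_coprimeVec {q : ℕ} {vp : Fin d → ℚ} (hcop : coprimeVec Sf q vp)
    {p : Nat.Primes} (hpq : (p : ℕ) ∣ q) (hpS : p ∉ Sf) : ∃ i, padicNorm p (vp i) = 1 := by
  obtain ⟨m, hm, hint, hgcd⟩ := hcop
  have hpm : padicNorm p (m : ℚ) = 1 := (padicNorm.nat_eq_one_iff _).2 fun h => hpS (hm.2 p h)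
  obtain ⟨i, hi⟩ : ∃ i, ¬ (p : ℕ) ∣ (vp i * m).num.natAbs := by
    by_contra! hall
    exact p.2.one_lt.ne' (Nat.dvd_one.1 (hgcd ▸ Nat.dvd_gcd hpq (Finset.dvd_gcd fun i _ => hall i)))
  refine ⟨i, ?_⟩
  have hnum : padicNorm p (vp i * m) = 1 := by
    rw [← Rat.coe_int_num_of_den_eq_one (hint i)]
    exact (padicNorm.int_eq_one_iff _).2 fun h => hi (Int.natCast_dvd.1 h)
  rwa [padicNorm.mul, hpm, mul_one] at hnum

lemma padicNorm_eq_one_of_coprimeVec {q : ℕ} (hq : memNS Sf q) {vp row : Fin d → ℚ}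
    (hcop : coprimeVec Sf q vp) {z : ℚ} (hz : IsSInt Sf z) (hrow : IsSIntVec Sf row)
    (hvp : vp = z • row) {p : Nat.Primes} (hpq : (p : ℕ) ∣ q) : padicNorm p z = 1 := by
  have hpS : p ∉ Sf := fun h => hq.2 p h hpq
  obtain ⟨i, hi⟩ := exists_padicNorm_eq_one_of_coprimeVec hcop hpq hpS
  rw [hvp, Pi.smul_apply, smul_eq_mul, padicNorm.mul] at hi
  have hz1 := hz p hpS
  have hr1 := hrow i p hpS
  nlinarith [padicNorm.nonneg (p := p) z, padicNorm.nonneg (p := p) (row i)]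

lemma isSInt_mul_div_iff {q : ℕ} {z a : ℚ} (hz : IsSInt Sf z) (ha : IsSInt Sf a)
    (hzq : ∀ p : Nat.Primes, (p : ℕ) ∣ q → padicNorm p z = 1) :
    IsSInt Sf (z * (a / q)) ↔ IsSInt Sf (a / q) := by
  refine ⟨fun h p hp => ?_, fun h => mem_sIntegers.1 (mul_mem hz h)⟩
  by_cases hpq : (p : ℕ) ∣ q
  · simpa [padicNorm.mul, hzq p hpq] using h p hp
  · rw [padicNorm.div, (padicNorm.nat_eq_one_iff _).2 hpq, div_one]
    exact ha p hp

lemma eq_smul_row_of_vecMul_inv_eq {vp : Fin d → ℚ} {γ : Matrix (Fin d) (Fin d) ℚ}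
    (hγ : IsUnit γ.det) {z : ℚ} {L : Fin d} (h : vp ᵥ* γ⁻¹ = fun j => if j = L then z else 0) :
    vp = z • γ L := by
  have hsingle : (fun j => if j = L then z else 0) = Pi.single L z :=
    funext fun j => (Pi.single_apply L z j).symm
  rw [← Matrix.vecMul_one vp, ← Matrix.nonsing_inv_mul _ hγ, ← Matrix.vecMul_vecMul, h,
    hsingle, Matrix.single_vecMul]
  rfl

lemma isSIntVec_vecMul_sub_iff_conj {q : ℕ} (hq : memNS Sf q) {vp : Fin d → ℚ}
    (hcop : coprimeVec Sf q vp) {γ δ : Matrix (Fin d) (Fin d) ℚ} (hγ : γ ∈ SLZS Sf d)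
    (hδ : ∀ i j, IsSInt Sf (δ i j)) {z : ℚ} (hz : IsSInt Sf z) {L : Fin d}
    (hvpγ : vp ᵥ* γ⁻¹ = fun j => if j = L then z else 0) :
    IsSIntVec Sf ((fun i => vp i / q) ᵥ* δ - fun i => vp i / q) ↔
      ∀ j, IsSInt Sf (((γ * δ * γ⁻¹) L j - if j = L then 1 else 0) / q) := by
  have hγu := isUnit_det_of_mem_SLZS hγ
  have hvp : vp = z • γ L := eq_smul_row_of_vecMul_inv_eq hγu hvpγ
  set a : Fin d → ℚ := fun j => (γ * δ * γ⁻¹) L j - if j = L then 1 else 0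
  have ha : a = (γ * δ * γ⁻¹) L - Pi.single L 1 := by
    funext j
    simp [a, Pi.single_apply]
  have haS : IsSIntVec Sf a := by
    rw [ha]
    refine IsSIntVec.sub ?_ (isSIntVec_single L (mem_sIntegers.1 (one_mem _)))
    exact isSInt_mul_apply (isSInt_mul_apply hγ.1 hδ) (inv_mem_SLZS hγ).1 L
  have key : ((fun i => vp i / q) ᵥ* δ - fun i => vp i / q) = (z • fun j => a j / q) ᵥ* γ := by
    have hu : (fun i => vp i / q) = ((q : ℚ)⁻¹ * z) • γ L := by
      rw [hvp, mul_smul]; funext i; simp [div_eq_inv_mul]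
    have haγ : a ᵥ* γ = γ L ᵥ* δ - γ L := by
      rw [ha, Matrix.sub_vecMul, Matrix.single_one_vecMul, ← Matrix.mul_apply_eq_vecMul,
        Matrix.nonsing_inv_mul_cancel_right _ _ hγu, Matrix.mul_apply_eq_vecMul]
      rfl
    have hc : (z • fun j => a j / q) = ((q : ℚ)⁻¹ * z) • a := by
      funext j; simp only [div_eq_inv_mul, Pi.smul_apply, smul_eq_mul]; ring
    rw [hc, Matrix.smul_vecMul, haγ, hu, Matrix.smul_vecMul, smul_sub]
  rw [key, isSIntVec_vecMul_iff hγ]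
  have hzq : ∀ p : Nat.Primes, (p : ℕ) ∣ q → padicNorm p z = 1 := fun p =>
    padicNorm_eq_one_of_coprimeVec hq hcop hz (fun i => hγ.1 L i) hvp
  exact forall_congr' fun j => isSInt_mul_div_iff hz (haS j) hzq

end SArith

/-- The identification of `Y_{v_p/q}` with `γ⁻¹Γ₁(q)γ\\UL_d(ℚ_S)`:
the assignment `(γ⁻¹Γ₁(q)γ)g ↦ (ℤ_S^d + v_p/q)g` is well defined and injective
(and it is surjective onto `Y_{v_p/q}` by definition). -/
theorem stmt4 (Sf : Finset Nat.Primes) (d : ℕ) (hd : 0 < d)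
    (q : ℕ) (hq : memNS Sf q)
    (vp : Fin d → ℚ) (hcop : coprimeVec Sf q vp)
    (γ : Matrix (Fin d) (Fin d) ℚ) (hγ : γ ∈ SLZS Sf d)
    (hγvp : ∃ z : ℚ, IsSInt Sf z ∧
      Matrix.vecMul vp γ⁻¹ = fun j : Fin d => if j = ⟨d - 1, by omega⟩ then z else 0) :
    ∀ g ∈ ULset Sf d, ∀ g' ∈ ULset Sf d,
      (affLat Sf (ratVec Sf fun i => vp i / q) g = affLat Sf (ratVec Sf fun i => vp i / q) g'
        ↔ ∃ γ' ∈ Gamma1 Sf q d hd, matDiag Sf (γ⁻¹ * γ' * γ) * g = g') := by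
  obtain ⟨z, hz, hvpγ⟩ := hγvp
  have hγu := isUnit_det_of_mem_SLZS hγ
  have hstab : ∀ δ ∈ SLZS Sf d, γ * δ * γ⁻¹ ∈ Gamma1 Sf q d hd ↔
      IsSIntVec Sf ((fun i => vp i / q) ᵥ* δ - fun i => vp i / q) := fun δ hδ =>
    (and_iff_right (mul_mem_SLZS (mul_mem_SLZS hγ hδ) (inv_mem_SLZS hγ))).trans
      (isSIntVec_vecMul_sub_iff_conj hq hcop hγ hδ.1 hz hvpγ).symm
  intro g hg g' hg'
  constructor
  · intro h
    obtain ⟨δ, hδ, hδg, hu⟩ :=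
      exists_matDiag_mul_eq_of_affLat_subset (isUnit_det_of_mem_ULset hg) h.symm.subset
    have hδ' : δ ∈ SLZS Sf d := ⟨hδ, det_eq_one_of_matDiag_mul_eq hg hg' hδg⟩
    refine ⟨γ * δ * γ⁻¹, (hstab δ hδ').2 hu, ?_⟩
    rwa [Matrix.mul_assoc, Matrix.nonsing_inv_mul_cancel_right _ _ hγu,
      Matrix.nonsing_inv_mul_cancel_left _ _ hγu]
  · rintro ⟨γ', hγ', rfl⟩
    have hδ : γ⁻¹ * γ' * γ ∈ SLZS Sf d := mul_mem_SLZS (mul_mem_SLZS (inv_mem_SLZS hγ) hγ'.1) hγ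
    have hconj : γ * (γ⁻¹ * γ' * γ) * γ⁻¹ = γ' := by
      simp only [← Matrix.mul_assoc]
      rw [Matrix.mul_nonsing_inv_cancel_right _ _ hγu, Matrix.mul_nonsing_inv _ hγu, Matrix.one_mul]
    exact (affLat_matDiag_mul hδ ((hstab _ hδ).1 (by rwa [hconj])) g).symm
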